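/- Let k be an algebraically closed field. Consider a triangular system over k in variables x₁ < x₂ < … < xₙ where for each i there is at most one polynomial r_i with leader x_i (either as an equation r_i = 0 or inequation r_i ≠ 0), and assume that on the solution set no initial and no separant of any r_i vanishes. Then every partial solution (a₁,…,a_{i−1}) of the subsystem in variables x₁,…,x_{i−1} extends to a solution (a₁,…,a_i) of the subsystem in variables x₁,…,x_i. Consequently, the solution set of a simple algebraic system over an algebraically closed field is nonempty, provided the system contains no contradictory constant equation. -/
import Mathlib


/-- Restriction of a partial solution `a : Fin m → k` to its first `j` coordinates. -/
def restrictSol {k : Type*} {m : ℕ} (a : Fin m → k) (j : ℕ) (hj : j ≤ m) : Fin j → k :=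
  fun t => a ⟨t, lt_of_lt_of_le t.2 hj⟩

/-- `a : Fin m → k` satisfies all constraints of the triangular system `(r, isEq)` whose
leader index is `< m`: for each `j < m` with constraint `r j = some p` (a polynomial in the
leader `x_j` with coefficients in the lower variables), the evaluation of `p` at
`(a_0, …, a_{j-1})` and at the leader value `a_j` is `0` if it is an equation
(`isEq j = true`) and `≠ 0` if it is an inequation (`isEq j = false`). -/
def SatUpTo {k : Type*} [CommSemiring k] {n : ℕ}
    (r : ∀ i : Fin n, Option (Polynomial (MvPolynomial (Fin (i : ℕ)) k)))
    (isEq : Fin n → Bool) (m : ℕ) (hm : m ≤ n) (a : Fin m → k) : Prop :=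
  ∀ (j : Fin n) (hj : (j : ℕ) < m) (p : Polynomial (MvPolynomial (Fin (j : ℕ)) k)),
    r j = some p →
    ((isEq j = true →
        (p.map (MvPolynomial.eval (restrictSol a j (le_of_lt hj)))).eval (a ⟨j, hj⟩) = 0) ∧
     (isEq j = false →
        (p.map (MvPolynomial.eval (restrictSol a j (le_of_lt hj)))).eval (a ⟨j, hj⟩) ≠ 0))

/-- Over an algebraically closed field, consider a triangular system with at most one
constraint (equation or inequation) per leader `x_i`, each of positive degree in its leader
(no contradictory constant equations), such that no initial vanishes at any partial solution
and no separant vanishes at any solution. Then every partial solution in the variables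
`x_0, …, x_{m-1}` extends to a partial solution in `x_0, …, x_m`; consequently the solution
set of such a simple algebraic system is nonempty. -/
theorem stmt11 {k : Type*} [Field k] [IsAlgClosed k] {n : ℕ}
    (r : ∀ i : Fin n, Option (Polynomial (MvPolynomial (Fin (i : ℕ)) k)))
    (isEq : Fin n → Bool)
    (hdeg : ∀ (i : Fin n) (p : Polynomial (MvPolynomial (Fin (i : ℕ)) k)),
        r i = some p → 0 < p.natDegree)
    (hinit : ∀ (i : Fin n) (p : Polynomial (MvPolynomial (Fin (i : ℕ)) k)),
        r i = some p → ∀ a : Fin (i : ℕ) → k,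
        SatUpTo r isEq (i : ℕ) i.isLt.le a →
        MvPolynomial.eval a p.leadingCoeff ≠ 0)
    (hsep : ∀ (i : Fin n) (p : Polynomial (MvPolynomial (Fin (i : ℕ)) k)),
        r i = some p → ∀ a : Fin n → k,
        SatUpTo r isEq n le_rfl a →
        ((Polynomial.derivative p).map
            (MvPolynomial.eval (restrictSol a i i.isLt.le))).eval (a i) ≠ 0) :
    (∀ (m : ℕ) (hm : m < n) (a : Fin m → k), SatUpTo r isEq m (le_of_lt hm) a →
        ∃ b : k, SatUpTo r isEq (m + 1) hm (Fin.snoc a b)) ∧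
    ∃ a : Fin n → k, SatUpTo r isEq n le_rfl a := by
  have key : ∀ (m : ℕ) (hm : m < n) (a : Fin m → k), SatUpTo r isEq m (le_of_lt hm) a →
      ∃ b : k, SatUpTo r isEq (m + 1) hm (Fin.snoc a b) := by
    intro m hm a ha
    -- restriction lemma
    have hres : ∀ (b : k) (j : ℕ) (hj : j ≤ m),
        restrictSol (Fin.snoc a b : Fin (m+1) → k) j (hj.trans m.le_succ) = restrictSol a j hj := by
      intro b j hj
      funext t
      show (Fin.snoc a b : Fin (m+1) → k) ⟨t, _⟩ = a ⟨t, _⟩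
      have : (⟨(t : ℕ), lt_of_lt_of_le t.2 (hj.trans m.le_succ)⟩ : Fin (m+1)) =
          Fin.castSucc ⟨t, lt_of_lt_of_le t.2 hj⟩ := rfl
      rw [this, Fin.snoc_castSucc]
    -- find b satisfying the constraint at index m (if any)
    have hb : ∃ b : k, ∀ p : Polynomial (MvPolynomial (Fin ((⟨m, hm⟩ : Fin n) : ℕ)) k),
        r ⟨m, hm⟩ = some p →
        ((isEq ⟨m, hm⟩ = true → (p.map (MvPolynomial.eval a)).eval b = 0) ∧
         (isEq ⟨m, hm⟩ = false → (p.map (MvPolynomial.eval a)).eval b ≠ 0)) := by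
      cases hr : r ⟨m, hm⟩ with
      | none => exact ⟨0, fun p hp => absurd hp (by simp)⟩
      | some p =>
        have hlead : MvPolynomial.eval a p.leadingCoeff ≠ 0 :=
          hinit ⟨m, hm⟩ p hr a ha
        set q := p.map (MvPolynomial.eval a) with hq
        have hqdeg : q.natDegree = p.natDegree :=
          Polynomial.natDegree_map_of_leadingCoeff_ne_zero _ hlead
        have hqpos : 0 < q.natDegree := hqdeg ▸ hdeg ⟨m, hm⟩ p hr
        have hq0 : q ≠ 0 := fun h => by simp [h] at hqpos
        cases hEq : isEq ⟨m, hm⟩ with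
        | true =>
          obtain ⟨b, hbroot⟩ := IsAlgClosed.exists_root q
            (Polynomial.natDegree_pos_iff_degree_pos.mp hqpos).ne'
          refine ⟨b, fun p' hp' => ?_⟩
          obtain rfl : p = p' := by injection hp'
          exact ⟨fun _ => hbroot, fun h => by simp at h⟩
        | false =>
          have : (q.natDegree : Cardinal) < Cardinal.mk k := by
            exact lt_of_lt_of_le (Cardinal.nat_lt_aleph0 _) (Cardinal.infinite_iff.mp inferInstance)
          obtain ⟨b, hbne⟩ := q.exists_eval_ne_zero_of_natDegree_lt_card hq0 this
          refine ⟨b, fun p' hp' => ?_⟩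
          obtain rfl : p = p' := by injection hp'
          exact ⟨fun h => by simp at h, fun _ => hbne⟩
    obtain ⟨b, hbprop⟩ := hb
    refine ⟨b, ?_⟩
    intro j hj p hp
    rcases Nat.lt_or_ge (j : ℕ) m with hjm | hjm
    · have := ha j hjm p hp
      have e1 : restrictSol (Fin.snoc a b : Fin (m+1) → k) (j : ℕ) (le_of_lt hj) =
          restrictSol a (j : ℕ) (le_of_lt hjm) := hres b j (le_of_lt hjm)
      have e2 : (Fin.snoc a b : Fin (m+1) → k) ⟨j, hj⟩ = a ⟨j, hjm⟩ := by
        have : (⟨(j : ℕ), hj⟩ : Fin (m+1)) = Fin.castSucc ⟨j, hjm⟩ := rfl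
        rw [this, Fin.snoc_castSucc]
      rw [e1, e2]
      exact this
    · have hjeq : (j : ℕ) = m := le_antisymm (Nat.lt_succ_iff.mp hj) hjm
      have hjj : j = ⟨m, hm⟩ := Fin.ext hjeq
      subst hjj
      have e1 : restrictSol (Fin.snoc a b : Fin (m+1) → k) m (le_of_lt hj) = a := by
        have := hres b m le_rfl
        rw [this]
        funext t
        simp [restrictSol]
      have e2 : (Fin.snoc a b : Fin (m+1) → k) ⟨m, hj⟩ = b := by
        have : (⟨m, hj⟩ : Fin (m+1)) = Fin.last m := rfl
        rw [this, Fin.snoc_last]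
      rw [e1, e2]
      exact hbprop p hp
  refine ⟨key, ?_⟩
  have main : ∀ (m : ℕ) (hm : m ≤ n), ∃ a : Fin m → k, SatUpTo r isEq m hm a := by
    intro m
    induction m with
    | zero => exact fun _ => ⟨Fin.elim0, fun j hj => absurd hj (Nat.not_lt_zero _)⟩
    | succ m ih =>
      intro hm
      obtain ⟨a, ha⟩ := ih (le_of_lt hm)
      obtain ⟨b, hb⟩ := key m hm a ha
      exact ⟨Fin.snoc a b, hb⟩
  exact main n le_rfl
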